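/- arXiv:2306.13158 — 5 statements merged into one kernel-verified Lean document; each statement's English description precedes it below -/
import Mathlib

section
/- Let g, h ∈ SU(2) with d(g,1) = d(h,1) = ψ (angular distance d(g,h) = arccos(tr(gh⁻¹)/2)) and with angle θ between g and h at the identity (the angle of the spherical triangle with vertices 1, g, h at the corner 1). Then the angular distance of the group commutator [g,h] = ghg⁻¹h⁻¹ from the identity is d([g,h],1) = 2·arcsin((sin ψ)²·(sin θ)). -/
open Matrix

private lemma su2_star_fin_two (a b c d : ℂ) :
    star !![a, b; c, d] = !![starRingEnd ℂ a, starRingEnd ℂ c;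
                             starRingEnd ℂ b, starRingEnd ℂ d] := by
  ext i j
  fin_cases i <;> fin_cases j <;> simp [Matrix.star_apply]

private lemma su2_star_eq_adjugate (g : Matrix (Fin 2) (Fin 2) ℂ)
    (hg : g ∈ Matrix.specialUnitaryGroup (Fin 2) ℂ) : star g = g.adjugate := by
  obtain ⟨hu, hd⟩ := Matrix.mem_specialUnitaryGroup_iff.mp hg
  have h1 : star g * g = 1 := Matrix.mem_unitaryGroup_iff'.mp hu
  have h2 : g * g.adjugate = 1 := by rw [Matrix.mul_adjugate, hd, one_smul]
  calc star g = star g * (g * g.adjugate) := by rw [h2, mul_one]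
    _ = (star g * g) * g.adjugate := by rw [mul_assoc]
    _ = g.adjugate := by rw [h1, one_mul]

/-- Explicit form of an SU(2) matrix. -/
private lemma su2_form (g : Matrix (Fin 2) (Fin 2) ℂ)
    (hg : g ∈ Matrix.specialUnitaryGroup (Fin 2) ℂ) :
    ∃ a b : ℂ, g = !![a, b; -(starRingEnd ℂ) b, (starRingEnd ℂ) a] ∧
      a.re ^ 2 + a.im ^ 2 + b.re ^ 2 + b.im ^ 2 = 1 := by
  have hstar := su2_star_eq_adjugate g hg
  rw [Matrix.adjugate_fin_two] at hstar
  have e00 : (starRingEnd ℂ) (g 0 0) = g 1 1 := by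
    have := congrFun (congrFun hstar 0) 0
    simpa [Matrix.star_apply] using this
  have e10 : (starRingEnd ℂ) (g 0 1) = -(g 1 0) := by
    have := congrFun (congrFun hstar 1) 0
    simpa [Matrix.star_apply] using this
  refine ⟨g 0 0, g 0 1, ?_, ?_⟩
  · ext i j
    fin_cases i <;> fin_cases j <;> simp [e00, e10]
  · obtain ⟨hu, _⟩ := Matrix.mem_specialUnitaryGroup_iff.mp hg
    have h1 : g * star g = 1 := Matrix.mem_unitaryGroup_iff.mp hu
    have h00 := congrFun (congrFun h1 0) 0
    simp only [Matrix.mul_apply, Fin.sum_univ_two, Matrix.star_apply,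
      Matrix.one_apply_eq] at h00
    have := congrArg Complex.re h00
    simp only [Complex.add_re, Complex.mul_re, Complex.one_re, RingHom.id_apply,
      Complex.conj_re, Complex.conj_im, Matrix.star_apply] at this
    simp only [star, RCLike.star_def, Complex.conj_re, Complex.conj_im] at this
    nlinarith [this]

/-- Trace computation for a product `g * star h` of two SU(2)-shaped matrices. -/
private lemma su2_trace_mul_star (a b p q : ℂ) :
    ((!![a, b; -(starRingEnd ℂ) b, (starRingEnd ℂ) a] *
        star !![p, q; -(starRingEnd ℂ) q, (starRingEnd ℂ) p]).trace).re / 2 =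
      a.re * p.re + (a.im * p.im + b.re * q.re + b.im * q.im) := by
  rw [su2_star_fin_two]
  simp only [Matrix.mul_fin_two, Matrix.trace_fin_two, Matrix.cons_val_zero,
    Matrix.cons_val_one, Matrix.head_cons, Matrix.head_fin_const, Matrix.cons_val',
    Matrix.empty_val', Matrix.cons_val_fin_one, Matrix.of_apply, Complex.conj_conj, map_neg]
  simp only [Complex.add_re, Complex.mul_re, Complex.mul_im, Complex.add_im,
    Complex.neg_re, Complex.neg_im, Complex.conj_re, Complex.conj_im]
  ring

/-- Trace of the commutator of two SU(2)-shaped matrices: a pure polynomial identity. -/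
private lemma su2_trace_commutator (a b p q : ℂ) :
    (((!![a, b; -(starRingEnd ℂ) b, (starRingEnd ℂ) a] *
        !![p, q; -(starRingEnd ℂ) q, (starRingEnd ℂ) p] *
        star !![a, b; -(starRingEnd ℂ) b, (starRingEnd ℂ) a] *
        star !![p, q; -(starRingEnd ℂ) q, (starRingEnd ℂ) p]).trace).re) / 2 =
      (a.re ^ 2 + (a.im ^ 2 + b.re ^ 2 + b.im ^ 2)) *
        (p.re ^ 2 + (p.im ^ 2 + q.re ^ 2 + q.im ^ 2)) -
      2 * ((a.im ^ 2 + b.re ^ 2 + b.im ^ 2) * (p.im ^ 2 + q.re ^ 2 + q.im ^ 2) -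
        (a.im * p.im + b.re * q.re + b.im * q.im) ^ 2) := by
  rw [su2_star_fin_two, su2_star_fin_two]
  simp only [Matrix.mul_fin_two, Matrix.trace_fin_two, Matrix.cons_val_zero,
    Matrix.cons_val_one, Matrix.head_cons, Matrix.head_fin_const, Matrix.cons_val',
    Matrix.empty_val', Matrix.cons_val_fin_one, Matrix.of_apply, Complex.conj_conj, map_neg]
  simp only [Complex.add_re, Complex.mul_re, Complex.mul_im, Complex.add_im,
    Complex.neg_re, Complex.neg_im, Complex.conj_re, Complex.conj_im]
  ring

private lemma su2_trace_one (a b : ℂ) :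
    ((!![a, b; -(starRingEnd ℂ) b, (starRingEnd ℂ) a] *
        star (1 : Matrix (Fin 2) (Fin 2) ℂ)).trace).re / 2 = a.re := by
  rw [star_one, mul_one]
  simp [Matrix.trace_fin_two]

private lemma su2_arccos_aux (ψ θ : ℝ) (hθ0 : 0 ≤ θ) (hθπ : θ ≤ Real.pi) :
    Real.arccos (1 - 2 * (Real.sin ψ ^ 2 * Real.sin θ) ^ 2) =
      2 * Real.arcsin (Real.sin ψ ^ 2 * Real.sin θ) := by
  set x := Real.sin ψ ^ 2 * Real.sin θ with hx
  have hsinθ0 : 0 ≤ Real.sin θ := Real.sin_nonneg_of_nonneg_of_le_pi hθ0 hθπ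
  have hx0 : 0 ≤ x := mul_nonneg (sq_nonneg _) hsinθ0
  have hx1 : x ≤ 1 := by
    have h1 : Real.sin ψ ^ 2 ≤ 1 := Real.sin_sq_le_one ψ
    have h2 : Real.sin θ ≤ 1 := Real.sin_le_one θ
    nlinarith [sq_nonneg (Real.sin ψ), hsinθ0]
  have key : (1 : ℝ) - 2 * x ^ 2 = Real.cos (2 * Real.arcsin x) := by
    rw [Real.cos_two_mul]
    have hs := Real.sin_arcsin (by linarith) hx1
    have hsc := Real.sin_sq_add_cos_sq (Real.arcsin x)
    linear_combination (-2 : ℝ) * hsc + (2 * Real.sin (Real.arcsin x) + 2 * x) * hs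
  rw [key]
  refine Real.arccos_cos ?_ ?_
  · have := Real.arcsin_nonneg.2 hx0
    linarith
  · have h1 : Real.arcsin x ≤ Real.pi / 2 := Real.arcsin_le_pi_div_two x
    linarith

/-- The bi-invariant angular distance on SU(2):
`d(g,h) = arccos(Re tr(g h⁻¹)/2)`.  For unitary `h` we have `h⁻¹ = star h`. -/
noncomputable def angDist (g h : Matrix (Fin 2) (Fin 2) ℂ) : ℝ :=
  Real.arccos (((g * star h).trace).re / 2)

/-- If `g, h ∈ SU(2)` with `d(g,1) = d(h,1) = ψ` and with angle `θ ∈ [0,π]`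
between `g` and `h` at the identity (characterized by the spherical law of
cosines `cos d(g,h) = cos²ψ + sin²ψ·cos θ` for the spherical triangle `1,g,h`),
then the commutator `[g,h] = g h g⁻¹ h⁻¹` satisfies
`d([g,h],1) = 2·arcsin((sin ψ)²·sin θ)`. -/
theorem angDist_commutator (g h : Matrix (Fin 2) (Fin 2) ℂ)
    (hg : g ∈ Matrix.specialUnitaryGroup (Fin 2) ℂ)
    (hh : h ∈ Matrix.specialUnitaryGroup (Fin 2) ℂ)
    (ψ θ : ℝ)
    (hψg : angDist g 1 = ψ) (hψh : angDist h 1 = ψ)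
    (hθ0 : 0 ≤ θ) (hθπ : θ ≤ Real.pi)
    (hangle : Real.cos (angDist g h) =
      Real.cos ψ ^ 2 + Real.sin ψ ^ 2 * Real.cos θ) :
    angDist (g * h * star g * star h) 1 =
      2 * Real.arcsin (Real.sin ψ ^ 2 * Real.sin θ) := by
  obtain ⟨a, b, rfl, hgnorm⟩ := su2_form g hg
  obtain ⟨p, q, rfl, hhnorm⟩ := su2_form h hh
  -- d(g,1) = arccos a.re, d(h,1) = arccos p.re
  have ha1 : Real.cos ψ = a.re := by
    rw [← hψg]
    unfold angDist
    rw [su2_trace_one a b]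
    exact Real.cos_arccos (by nlinarith [hgnorm, sq_nonneg (a.re + 1)])
      (by nlinarith [hgnorm, sq_nonneg (a.re - 1)])
  have hp1 : Real.cos ψ = p.re := by
    rw [← hψh]
    unfold angDist
    rw [su2_trace_one p q]
    exact Real.cos_arccos (by nlinarith [hhnorm, sq_nonneg (p.re + 1)])
      (by nlinarith [hhnorm, sq_nonneg (p.re - 1)])
  -- sin²ψ
  have hs2 : Real.sin ψ ^ 2 = a.im ^ 2 + b.re ^ 2 + b.im ^ 2 := by
    have hc : Real.cos ψ ^ 2 = a.re ^ 2 := by rw [ha1]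
    linarith [Real.sin_sq_add_cos_sq ψ, hgnorm, hc]
  have hs2' : Real.sin ψ ^ 2 = p.im ^ 2 + q.re ^ 2 + q.im ^ 2 := by
    have hc : Real.cos ψ ^ 2 = p.re ^ 2 := by rw [hp1]
    linarith [Real.sin_sq_add_cos_sq ψ, hhnorm, hc]
  -- the dot product from the angle hypothesis
  have hT : Real.cos (angDist !![a, b; -(starRingEnd ℂ) b, (starRingEnd ℂ) a]
      !![p, q; -(starRingEnd ℂ) q, (starRingEnd ℂ) p]) =
      a.re * p.re + (a.im * p.im + b.re * q.re + b.im * q.im) := by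
    unfold angDist
    rw [su2_trace_mul_star a b p q]
    refine Real.cos_arccos ?_ ?_
    · nlinarith [sq_nonneg (a.re + p.re), sq_nonneg (a.im + p.im), sq_nonneg (b.re + q.re),
        sq_nonneg (b.im + q.im), hgnorm, hhnorm]
    · nlinarith [sq_nonneg (a.re - p.re), sq_nonneg (a.im - p.im), sq_nonneg (b.re - q.re),
        sq_nonneg (b.im - q.im), hgnorm, hhnorm]
  have hD : a.im * p.im + b.re * q.re + b.im * q.im = Real.sin ψ ^ 2 * Real.cos θ := by
    rw [hT] at hangle
    have hap : a.re * p.re = Real.cos ψ ^ 2 := by rw [← ha1, ← hp1]; ring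
    linarith [hangle, hap]
  -- the commutator trace
  unfold angDist
  rw [star_one, mul_one, su2_trace_commutator a b p q]
  have hE : (a.re ^ 2 + (a.im ^ 2 + b.re ^ 2 + b.im ^ 2)) *
        (p.re ^ 2 + (p.im ^ 2 + q.re ^ 2 + q.im ^ 2)) -
      2 * ((a.im ^ 2 + b.re ^ 2 + b.im ^ 2) * (p.im ^ 2 + q.re ^ 2 + q.im ^ 2) -
        (a.im * p.im + b.re * q.re + b.im * q.im) ^ 2) =
      1 - 2 * (Real.sin ψ ^ 2 * Real.sin θ) ^ 2 := by
    have h1 : a.re ^ 2 + (a.im ^ 2 + b.re ^ 2 + b.im ^ 2) = 1 := by linarith [hgnorm]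
    have h2 : p.re ^ 2 + (p.im ^ 2 + q.re ^ 2 + q.im ^ 2) = 1 := by linarith [hhnorm]
    rw [h1, h2, ← hs2, ← hs2', hD]
    linear_combination 2 * Real.sin ψ ^ 2 * Real.sin ψ ^ 2 * Real.sin_sq_add_cos_sq θ
  rw [hE]
  exact su2_arccos_aux ψ θ hθ0 hθπ
end

section
/- With ω_n and ζ_n defined by (ω₁,ζ₁) = (g, h⁻¹g⁻¹), (ω_{n+1},ζ_{n+1}) = (ω_n⁻¹ζ_n⁻¹, ω_nζ_n) in the free group F₂, the reduced word lengths for n ≥ 2 are: len(ω_n) = (13·2^{n-2}+2)/7 and len(ζ_n) = (13·2^{n-2}+2)/7 when n ≡ 0 mod 3; len(ω_n) = len(ζ_n) = (13·2^{n-2}+4)/7 when n ≡ 1 mod 3 (n ≥ 4); len(ω_n) = (13·2^{n-2}−6)/7 and len(ζ_n) = (13·2^{n-2}+8)/7 when n ≡ 2 mod 3. -/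
/-!
Write `g, h` for the generators and `G, H` for their inverses, and record for a reduced word
only its first two and last two letters. From `n = 3` on, the pair `(ω_n, ζ_n)` runs through a
cycle of three such frame patterns, starting with `(Hg…hG, hg…HG)` at `n = 3`. In each product
`ω_n⁻¹ ζ_n⁻¹`, `ω_n ζ_n` along the cycle the frames show that either nothing cancels at the
junction or exactly one letter pair `Gg` does and the letters `h h` meeting behind it do not.
Hence the lengths obey `(L, L) ↦ (2L, 2L) ↦ (4L - 2, 4L) ↦ (8L - 2, 8L - 2)`, and
`7 L = 13·2^{n-2} + 2` at `n ≡ 0 mod 3` propagates by induction.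
-/

namespace FreeGroup

variable {α : Type*} [DecidableEq α]

theorem toWord_mul_of_red {x y : FreeGroup α} {L : List (α × Bool)}
    (hred : Red (x.toWord ++ y.toWord) L) (hL : IsReduced L) : (x * y).toWord = L := by
  rw [toWord_mul, reduce.eq_of_red hred, hL.reduce_eq]

/-- The reduced word of `x` starts with `a₁ a₂` and ends with `b₁ b₂`, at four distinct
positions. -/
def HasFrame (x : FreeGroup α) (a₁ a₂ b₁ b₂ : α × Bool) : Prop :=
  ∃ t, x.toWord = a₁ :: a₂ :: t ++ [b₁, b₂]

variable {x y : FreeGroup α} {a₁ a₂ b₁ b₂ c₁ c₂ d₁ d₂ : α × Bool}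

theorem HasFrame.inv (hx : HasFrame x a₁ a₂ b₁ b₂) :
    HasFrame x⁻¹ (b₂.1, !b₂.2) (b₁.1, !b₁.2) (a₂.1, !a₂.2) (a₁.1, !a₁.2) := by
  obtain ⟨t, ht⟩ := hx
  exact ⟨invRev t, by simp [toWord_inv, ht, invRev]⟩

theorem toWord_mul_of_boundary {t s : List (α × Bool)} (ht : x.toWord = a₁ :: a₂ :: t ++ [b₁, b₂])
    (hs : y.toWord = c₁ :: c₂ :: s ++ [d₁, d₂]) (hbc : b₂.1 = c₁.1 → b₂.2 = c₁.2) :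
    (x * y).toWord = a₁ :: a₂ :: (t ++ [b₁, b₂, c₁, c₂] ++ s) ++ [d₁, d₂] := by
  have hx : IsReduced ((a₁ :: a₂ :: t ++ [b₁]) ++ [b₂]) := by
    rw [List.append_assoc]; exact ht ▸ isReduced_toWord
  have hy : IsReduced (c₁ :: c₂ :: s ++ [d₁, d₂]) := hs ▸ isReduced_toWord
  have hxy : IsReduced ((a₁ :: a₂ :: t ++ [b₁]) ++ b₂ :: (c₁ :: c₂ :: s ++ [d₁, d₂])) :=
    List.isChain_append_cons_cons.2 ⟨hx, hbc, hy⟩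
  refine toWord_mul_of_red ?_ (by convert hxy using 1; simp)
  rw [ht, hs]; convert Red.refl using 1; simp

theorem toWord_mul_of_boundary_cancel {t s : List (α × Bool)}
    (ht : x.toWord = a₁ :: a₂ :: t ++ [b₁, b₂])
    (hs : y.toWord = (b₂.1, !b₂.2) :: c₂ :: s ++ [d₁, d₂])
    (hbc : b₁.1 = c₂.1 → b₁.2 = c₂.2) :
    (x * y).toWord = a₁ :: a₂ :: (t ++ [b₁, c₂] ++ s) ++ [d₁, d₂] := by
  have hx : IsReduced (a₁ :: a₂ :: t ++ [b₁]) :=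
    (isReduced_toWord (x := x)).infix ⟨[], [b₂], by simp [ht]⟩
  have hy : IsReduced (c₂ :: (s ++ [d₁, d₂])) :=
    (isReduced_toWord (x := y)).infix ⟨[(b₂.1, !b₂.2)], [], by simp [hs]⟩
  have hxy : IsReduced ((a₁ :: a₂ :: t) ++ b₁ :: c₂ :: (s ++ [d₁, d₂])) :=
    List.isChain_append_cons_cons.2 ⟨hx, hbc, hy⟩
  refine toWord_mul_of_red (.single ?_) (by convert hxy using 1; simp)
  simpa [ht, hs] using
    Red.Step.not (L₁ := a₁ :: a₂ :: t ++ [b₁]) (L₂ := c₂ :: s ++ [d₁, d₂]) (x := b₂.1) (b := b₂.2)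

theorem HasFrame.mul (hx : HasFrame x a₁ a₂ b₁ b₂) (hy : HasFrame y c₁ c₂ d₁ d₂)
    (hbc : b₂.1 = c₁.1 → b₂.2 = c₁.2) : HasFrame (x * y) a₁ a₂ d₁ d₂ := by
  obtain ⟨t, ht⟩ := hx
  obtain ⟨s, hs⟩ := hy
  exact ⟨_, toWord_mul_of_boundary ht hs hbc⟩

theorem HasFrame.norm_mul (hx : HasFrame x a₁ a₂ b₁ b₂) (hy : HasFrame y c₁ c₂ d₁ d₂)
    (hbc : b₂.1 = c₁.1 → b₂.2 = c₁.2) : (x * y).norm = x.norm + y.norm := by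
  obtain ⟨t, ht⟩ := hx
  obtain ⟨s, hs⟩ := hy
  simp only [norm, toWord_mul_of_boundary ht hs hbc, ht, hs, List.length_append, List.length_cons]
  omega

theorem HasFrame.mul_cancel (hx : HasFrame x a₁ a₂ b₁ b₂) (hy : HasFrame y (b₂.1, !b₂.2) c₂ d₁ d₂)
    (hbc : b₁.1 = c₂.1 → b₁.2 = c₂.2) : HasFrame (x * y) a₁ a₂ d₁ d₂ := by
  obtain ⟨t, ht⟩ := hx
  obtain ⟨s, hs⟩ := hy
  exact ⟨_, toWord_mul_of_boundary_cancel ht hs hbc⟩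

theorem HasFrame.norm_mul_cancel (hx : HasFrame x a₁ a₂ b₁ b₂)
    (hy : HasFrame y (b₂.1, !b₂.2) c₂ d₁ d₂) (hbc : b₁.1 = c₂.1 → b₁.2 = c₂.2) :
    (x * y).norm + 2 = x.norm + y.norm := by
  obtain ⟨t, ht⟩ := hx
  obtain ⟨s, hs⟩ := hy
  simp only [norm, toWord_mul_of_boundary_cancel ht hs hbc, ht, hs, List.length_append,
    List.length_cons]
  omega

end FreeGroup

namespace Elkasapy

open FreeGroup

abbrev g : Fin 2 × Bool := (0, true)
abbrev gInv : Fin 2 × Bool := (0, false)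
abbrev h : Fin 2 × Bool := (1, true)
abbrev hInv : Fin 2 × Bool := (1, false)

/-- The frames of `(ω_n, ζ_n)` for `n ≡ 0 mod 3`; `StageB` and `StageC` are those for
`n ≡ 1, 2 mod 3`. -/
def StageA (x y : FreeGroup (Fin 2)) (L : ℕ) : Prop :=
  HasFrame x hInv g h gInv ∧ HasFrame y h g hInv gInv ∧ x.norm = L ∧ y.norm = L

def StageB (x y : FreeGroup (Fin 2)) (L : ℕ) : Prop :=
  HasFrame x g hInv gInv hInv ∧ HasFrame y hInv g hInv gInv ∧ x.norm = L ∧ y.norm = L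

def StageC (x y : FreeGroup (Fin 2)) (L M : ℕ) : Prop :=
  HasFrame x h g gInv h ∧ HasFrame y g hInv hInv gInv ∧ x.norm = L ∧ y.norm = M

variable {x y : FreeGroup (Fin 2)}

theorem StageA.next {L : ℕ} (hA : StageA x y L) : StageB (x⁻¹ * y⁻¹) (x * y) (2 * L) := by
  obtain ⟨hx, hy, hxL, hyL⟩ := hA
  refine ⟨hx.inv.mul hy.inv (by decide), hx.mul hy (by decide), ?_, ?_⟩
  · rw [hx.inv.norm_mul hy.inv (by decide), norm_inv_eq, norm_inv_eq]; omega
  · rw [hx.norm_mul hy (by decide)]; omega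

theorem StageB.next {L : ℕ} (hB : StageB x y L) :
    StageC (x⁻¹ * y⁻¹) (x * y) (2 * L - 2) (2 * L) := by
  obtain ⟨hx, hy, hxL, hyL⟩ := hB
  refine ⟨hx.inv.mul_cancel hy.inv (by decide), hx.mul hy (by decide), ?_, ?_⟩
  · have := hx.inv.norm_mul_cancel hy.inv (by decide)
    rw [norm_inv_eq, norm_inv_eq] at this
    omega
  · rw [hx.norm_mul hy (by decide)]; omega

theorem StageC.next {L M : ℕ} (hC : StageC x y L M) : StageA (x⁻¹ * y⁻¹) (x * y) (L + M) := by
  obtain ⟨hx, hy, hxL, hyM⟩ := hC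
  refine ⟨hx.inv.mul hy.inv (by decide), hx.mul hy (by decide), ?_, ?_⟩
  · rw [hx.inv.norm_mul hy.inv (by decide), norm_inv_eq, norm_inv_eq]; omega
  · rw [hx.norm_mul hy (by decide)]; omega

theorem stages_of_stageA {ω ζ : ℕ → FreeGroup (Fin 2)}
    (hωrec : ∀ n ≥ 1, ω (n + 1) = (ω n)⁻¹ * (ζ n)⁻¹) (hζrec : ∀ n ≥ 1, ζ (n + 1) = ω n * ζ n)
    {n L : ℕ} (hn : 1 ≤ n) (hA : StageA (ω n) (ζ n) L) :
    StageB (ω (n + 1)) (ζ (n + 1)) (2 * L) ∧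
      StageC (ω (n + 2)) (ζ (n + 2)) (4 * L - 2) (4 * L) ∧
      StageA (ω (n + 3)) (ζ (n + 3)) (8 * L - 2) := by
  have hB : StageB (ω (n + 1)) (ζ (n + 1)) (2 * L) := by
    rw [hωrec n hn, hζrec n hn]; exact hA.next
  have hC : StageC (ω (n + 2)) (ζ (n + 2)) (4 * L - 2) (4 * L) := by
    rw [hωrec (n + 1) (by omega), hζrec (n + 1) (by omega), show 4 * L = 2 * (2 * L) by ring]
    exact hB.next
  refine ⟨hB, hC, ?_⟩
  rw [hωrec (n + 2) (by omega), hζrec (n + 2) (by omega)]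
  convert hC.next using 1
  have : 2 ≤ L := by obtain ⟨⟨t, ht⟩, -, rfl, -⟩ := hA; simp [FreeGroup.norm, ht]
  omega

theorem exists_stageA (ω ζ : ℕ → FreeGroup (Fin 2)) (hω1 : ω 1 = FreeGroup.of 0)
    (hζ1 : ζ 1 = (FreeGroup.of 1)⁻¹ * (FreeGroup.of 0)⁻¹)
    (hωrec : ∀ n ≥ 1, ω (n + 1) = (ω n)⁻¹ * (ζ n)⁻¹) (hζrec : ∀ n ≥ 1, ζ (n + 1) = ω n * ζ n)
    (k : ℕ) : ∃ L, 7 * L = 13 * 2 ^ (3 * k + 1) + 2 ∧ StageA (ω (3 * k + 3)) (ζ (3 * k + 3)) L := by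
  induction k with
  | zero =>
    refine ⟨4, rfl, ⟨[], ?_⟩, ⟨[], ?_⟩, ?_, ?_⟩ <;>
      simp only [hωrec 2 (by norm_num), hζrec 2 (by norm_num), hωrec 1 le_rfl, hζrec 1 le_rfl,
        hω1, hζ1] <;> decide
  | succ k ih =>
    obtain ⟨L, hL, hAk⟩ := ih
    refine ⟨8 * L - 2, ?_, (stages_of_stageA hωrec hζrec (by omega) hAk).2.2⟩
    rw [show 3 * (k + 1) + 1 = 3 * k + 1 + 3 by ring, pow_add]
    omega

end Elkasapy

open Elkasapy

/-- Reduced word lengths of Elkasapy's words `ω_n, ζ_n` in `F₂`, given by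
`(ω₁,ζ₁) = (g, h⁻¹g⁻¹)`, `(ω_{n+1},ζ_{n+1}) = (ω_n⁻¹ζ_n⁻¹, ω_nζ_n)`.
For `n ≥ 2`:
`len(ω_n) = len(ζ_n) = (13·2^{n-2}+2)/7` when `n ≡ 0 mod 3`;
`len(ω_n) = len(ζ_n) = (13·2^{n-2}+4)/7` when `n ≡ 1 mod 3` (`n ≥ 4`);
`len(ω_n) = (13·2^{n-2}-6)/7`, `len(ζ_n) = (13·2^{n-2}+8)/7` when `n ≡ 2 mod 3`.
The divisions are stated multiplied through by `7` to stay in `ℕ`. -/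
theorem elkasapy_lengths (ω ζ : ℕ → FreeGroup (Fin 2))
    (hω1 : ω 1 = FreeGroup.of 0)
    (hζ1 : ζ 1 = (FreeGroup.of 1)⁻¹ * (FreeGroup.of 0)⁻¹)
    (hωrec : ∀ n ≥ 1, ω (n + 1) = (ω n)⁻¹ * (ζ n)⁻¹)
    (hζrec : ∀ n ≥ 1, ζ (n + 1) = ω n * ζ n) :
    ∀ n ≥ 2,
      (n % 3 = 0 →
        7 * (ω n).norm = 13 * 2 ^ (n - 2) + 2 ∧
        7 * (ζ n).norm = 13 * 2 ^ (n - 2) + 2) ∧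
      (n % 3 = 1 → n ≥ 4 →
        7 * (ω n).norm = 13 * 2 ^ (n - 2) + 4 ∧
        7 * (ζ n).norm = 13 * 2 ^ (n - 2) + 4) ∧
      (n % 3 = 2 →
        7 * (ω n).norm + 6 = 13 * 2 ^ (n - 2) ∧
        7 * (ζ n).norm = 13 * 2 ^ (n - 2) + 8) := by
  intro n hn
  obtain rfl | hn3 := hn.eq_or_lt
  · have hω2 : (ω 2).norm = 1 := by rw [hωrec 1 le_rfl, hω1, hζ1]; decide
    have hζ2 : (ζ 2).norm = 3 := by rw [hζrec 1 le_rfl, hω1, hζ1]; decide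
    simp [hω2, hζ2]
  obtain ⟨k, r, hr, rfl⟩ : ∃ k r, r < 3 ∧ n = 3 * k + 3 + r :=
    ⟨(n - 3) / 3, (n - 3) % 3, Nat.mod_lt _ (by norm_num), by omega⟩
  obtain ⟨L, hL, hAk⟩ := exists_stageA ω ζ hω1 hζ1 hωrec hζrec k
  obtain ⟨⟨-, -, hωB, hζB⟩, ⟨-, -, hωC, hζC⟩, -⟩ := stages_of_stageA hωrec hζrec (by omega) hAk
  obtain ⟨-, -, hωA, hζA⟩ := hAk
  have hpow : 2 ^ (3 * k + 3 + r - 2) = 2 ^ r * 2 ^ (3 * k + 1) := by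
    rw [← pow_add]; congr 1; omega
  rw [hpow]
  interval_cases r <;> simp only [add_zero, hωA, hζA, hωB, hζB, hωC, hζC] <;> omega
end

section
/- There exists a sequence of nontrivial words ω_n in the free group F₂ with len(ω_n) = O(2ⁿ) and nil(ω_n) ≥ f_n (the n-th Fibonacci number). Consequently, the exponent λ = lim_{n→∞} (log ℓ_{2,n})/(log n), where ℓ_{2,n} is the minimal length of a word in the n-th lower central term of F₂, satisfies λ ≤ log_φ 2, where φ = (1+√5)/2. -/
/-!
Set `A₀ = x`, `B₀ = y` and `(Aₙ₊₁, Bₙ₊₁) = (AₙBₙ, Aₙ⁻¹Bₙ⁻¹)`. Then `Aₙ₊₂ = ⁅Aₙ₊₁, Aₙ⁻¹⁆`, so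
`⁅γᵢ, γⱼ⁆ ≤ γᵢ₊ⱼ` puts `Aₙ` in the `fₙ`-th term of the lower central series, while the length of
`Aₙ` at most doubles at each step. `Aₙ ≠ 1` because its image under `x ↦ (0 1 2 3 4)`,
`y ↦ (0 1 3 4 2)` in `S₅` cycles with period 3 through nontrivial permutations. Comparing
`ℓ_{2,fₙ} ≤ 2ⁿ` with `fₙ ≥ φⁿ⁻²` bounds the exponent by `log 2 / log φ`.
-/

open Filter
open scoped commutatorElement

/-- `ℓ_{2,n}`: the minimal reduced word length of a nontrivial element of the
`n`-th (paper-indexed) lower central series term of the free group `F₂`. -/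
noncomputable def minLenLCS (n : ℕ) : ℕ :=
  sInf {m : ℕ | ∃ w : FreeGroup (Fin 2),
    w ∈ (⊤ : Subgroup (FreeGroup (Fin 2))).lowerCentralSeries (n - 1) ∧ w ≠ 1 ∧ w.norm = m}

namespace Subgroup

variable {G : Type*} [Group G]

theorem commutator_commutator_le_of_rotate {H₁ H₂ H₃ N : Subgroup G} [N.Normal]
    (h1 : ⁅⁅H₂, H₃⁆, H₁⁆ ≤ N) (h2 : ⁅⁅H₃, H₁⁆, H₂⁆ ≤ N) : ⁅⁅H₁, H₂⁆, H₃⁆ ≤ N := by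
  simp only [← QuotientGroup.ker_mk' N, ← map_eq_bot_iff, map_commutator] at h1 h2 ⊢
  exact commutator_commutator_eq_bot_of_rotate h1 h2

theorem commutator_lowerCentralSeries_le (i j : ℕ) :
    ⁅(⊤ : Subgroup G).lowerCentralSeries i, (⊤ : Subgroup G).lowerCentralSeries j⁆ ≤
      (⊤ : Subgroup G).lowerCentralSeries (i + j + 1) := by
  induction j generalizing i with
  | zero => exact le_rfl
  | succ j ih =>
    rw [lowerCentralSeries_succ, commutator_comm, show i + (j + 1) + 1 = i + 1 + j + 1 by lia]
    apply commutator_commutator_le_of_rotate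
    · rw [commutator_comm ⊤, ← lowerCentralSeries_succ]
      exact ih (i + 1)
    · exact commutator_mono ((ih i).trans_eq (by rw [Nat.add_right_comm])) le_rfl

theorem mem_lowerCentralSeries_fib {a : ℕ → G} (ha : ∀ n, a (n + 2) = ⁅a (n + 1), (a n)⁻¹⁆)
    (n : ℕ) : a n ∈ (⊤ : Subgroup G).lowerCentralSeries (Nat.fib n - 1) := by
  induction n using Nat.twoStepInduction with
  | zero | one => exact mem_top _
  | more n hn hn1 =>
    have hfib : Nat.fib (n + 2) - 1 ≤ (Nat.fib (n + 1) - 1) + (Nat.fib n - 1) + 1 := by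
      have := Nat.fib_pos.mpr n.succ_pos
      rw [Nat.fib_add_two]
      lia
    rw [ha]
    exact lowerCentralSeries_antitone _ hfib <| commutator_lowerCentralSeries_le _ _ <|
      commutator_mem_commutator hn1 (inv_mem hn)

end Subgroup

section FibonacciStep

variable {G H : Type*} [Group G] [Group H]

def fibonacciStep (p : G × G) : G × G := (p.1 * p.2, p.1⁻¹ * p.2⁻¹)

theorem fst_iterate_fibonacciStep_add_two (p : G × G) (n : ℕ) :
    (fibonacciStep^[n + 2] p).1 =
      ⁅(fibonacciStep^[n + 1] p).1, ((fibonacciStep^[n] p).1)⁻¹⁆ := by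
  simp only [Function.iterate_succ_apply', fibonacciStep, commutatorElement_def]
  group

theorem semiconj_prodMap_fibonacciStep (f : G →* H) :
    Function.Semiconj (Prod.map f f) fibonacciStep fibonacciStep := fun p => by
  simp [fibonacciStep]

theorem norm_iterate_fibonacciStep_le {α : Type*} [DecidableEq α] {p : FreeGroup α × FreeGroup α}
    {c : ℕ} (h1 : p.1.norm ≤ c) (h2 : p.2.norm ≤ c) (n : ℕ) :
    (fibonacciStep^[n] p).1.norm ≤ 2 ^ n * c ∧ (fibonacciStep^[n] p).2.norm ≤ 2 ^ n * c := by
  induction n with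
  | zero => simpa using ⟨h1, h2⟩
  | succ n ih =>
    rw [Function.iterate_succ_apply', pow_succ]
    have hsum := add_le_add ih.1 ih.2
    refine ⟨(FreeGroup.norm_mul_le _ _).trans (by lia), (FreeGroup.norm_mul_le _ _).trans ?_⟩
    rw [FreeGroup.norm_inv_eq, FreeGroup.norm_inv_eq]
    lia

end FibonacciStep

section SymmetricGroup

set_option maxRecDepth 10000 in
theorem isPeriodicPt_fibonacciStep_perm :
    Function.IsPeriodicPt fibonacciStep 3 (finRotate 5, c[0, 1, 3, 4, 2]) := by
  decide

theorem fst_iterate_fibonacciStep_perm_ne_one (n : ℕ) :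
    (fibonacciStep^[n] (finRotate 5, c[0, 1, 3, 4, 2])).1 ≠ 1 := by
  rw [← isPeriodicPt_fibonacciStep_perm.iterate_mod_apply]
  have hlt : n % 3 < 3 := Nat.mod_lt n (by norm_num)
  generalize n % 3 = k at hlt
  revert k
  decide

end SymmetricGroup

section FibonacciWord

open FreeGroup

def fibonacciWord (n : ℕ) : FreeGroup (Fin 2) := (fibonacciStep^[n] (of 0, of 1)).1

theorem fibonacciWord_mem_lowerCentralSeries (n : ℕ) :
    fibonacciWord n ∈ (⊤ : Subgroup (FreeGroup (Fin 2))).lowerCentralSeries (Nat.fib n - 1) :=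
  Subgroup.mem_lowerCentralSeries_fib (fst_iterate_fibonacciStep_add_two _) n

theorem norm_fibonacciWord_le (n : ℕ) : (fibonacciWord n).norm ≤ 2 ^ n :=
  (norm_iterate_fibonacciStep_le (p := (of 0, of 1)) (norm_of 0).le (norm_of 1).le n).1.trans_eq
    (mul_one _)

theorem fibonacciWord_ne_one (n : ℕ) : fibonacciWord n ≠ 1 := by
  let f : FreeGroup (Fin 2) →* Equiv.Perm (Fin 5) := lift ![finRotate 5, c[0, 1, 3, 4, 2]]
  have hf : f (fibonacciWord n) = (fibonacciStep^[n] (finRotate 5, c[0, 1, 3, 4, 2])).1 := by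
    have := congrArg Prod.fst ((semiconj_prodMap_fibonacciStep f).iterate_right n (of 0, of 1))
    simpa [f, fibonacciWord] using this
  intro h
  exact fst_iterate_fibonacciStep_perm_ne_one n (by rw [← hf, h, f.map_one])

theorem minLenLCS_fib_le (n : ℕ) : minLenLCS (Nat.fib n) ≤ 2 ^ n :=
  calc minLenLCS (Nat.fib n) ≤ (fibonacciWord n).norm :=
        Nat.sInf_le ⟨fibonacciWord n, fibonacciWord_mem_lowerCentralSeries n,
          fibonacciWord_ne_one n, rfl⟩
    _ ≤ 2 ^ n := norm_fibonacciWord_le n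

end FibonacciWord

section Analysis

open Real goldenRatio

theorem goldenRatio_pow_le_fib_add_two (n : ℕ) : φ ^ n ≤ Nat.fib (n + 2) := by
  have hmono : (Nat.fib (n + 1) : ℝ) ≤ Nat.fib (n + 2) := by exact_mod_cast Nat.fib_le_fib_succ
  have hrec : φ * Nat.fib (n + 2) + Nat.fib (n + 1) = φ ^ 2 * φ ^ n := by
    rw [goldenRatio_mul_fib_succ_add_fib]
    ring
  have hφ : 0 < φ := goldenRatio_pos
  nlinarith [goldenRatio_sq]

theorem log_div_log_fib_le {m : ℕ} {b : ℝ} (hb : 1 ≤ b) {k : ℕ} (hk : 1 ≤ k)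
    (hm : (m : ℝ) ≤ b ^ (k + 2)) :
    log m / log (Nat.fib (k + 2)) ≤ (1 + 2 / k) * (log b / log φ) := by
  have hlogb : 0 ≤ log b := log_nonneg hb
  have hlogφ : 0 < log φ := log_pos one_lt_goldenRatio
  have hk' : (0 : ℝ) < k := by exact_mod_cast hk
  have hnum : log m ≤ (k + 2) * log b := by
    rcases (Nat.cast_nonneg m : (0 : ℝ) ≤ m).eq_or_lt with h0 | hpos
    · rw [← h0, log_zero]
      positivity
    · exact_mod_cast (log_le_log hpos hm).trans_eq (log_pow _ _)
  have hden : k * log φ ≤ log (Nat.fib (k + 2)) := by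
    rw [← log_pow]
    exact log_le_log (pow_pos goldenRatio_pos k) (goldenRatio_pow_le_fib_add_two k)
  calc log m / log (Nat.fib (k + 2)) ≤ (k + 2) * log b / (k * log φ) :=
        div_le_div₀ (by positivity) hnum (by positivity) hden
    _ = (1 + 2 / k) * (log b / log φ) := by field_simp

theorem le_log_div_log_goldenRatio {ℓ : ℕ → ℕ} {b l : ℝ} (hb : 1 ≤ b)
    (hℓ : ∀ n, (ℓ (Nat.fib n) : ℝ) ≤ b ^ n)
    (hl : Tendsto (fun n : ℕ => log (ℓ n) / log n) atTop (nhds l)) :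
    l ≤ log b / log φ := by
  have hfib : Tendsto (fun k => Nat.fib (k + 2)) atTop atTop :=
    Nat.fib_add_two_strictMono.tendsto_atTop
  have hbound : Tendsto (fun k : ℕ => (1 + 2 / (k : ℝ)) * (log b / log φ)) atTop
      (nhds (log b / log φ)) := by
    simpa using ((tendsto_const_div_atTop_nhds_zero_nat (2 : ℝ)).const_add 1).mul_const
      (log b / log φ)
  refine le_of_tendsto_of_tendsto (hl.comp hfib) hbound ?_
  filter_upwards [eventually_ge_atTop 1] with k hk
  exact log_div_log_fib_le hb hk (hℓ (k + 2))

end Analysis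

/-- There is a sequence of nontrivial words `ω_n ∈ F₂` with `len(ω_n) = O(2ⁿ)`
and nilpotence degree at least the `n`-th Fibonacci number; consequently the
exponent `λ = lim (log ℓ_{2,n})/(log n)` satisfies `λ ≤ log_φ 2` with
`φ = (1+√5)/2`  (the limit is expressed via the hypothesis that the limit
exists and equals `l`). -/
theorem elkasapy_lambda_le :
    (∃ ω : ℕ → FreeGroup (Fin 2), (∀ n ≥ 1, ω n ≠ 1) ∧
      (∃ C : ℕ, ∀ n ≥ 1, (ω n).norm ≤ C * 2 ^ n) ∧
      (∀ n ≥ 1, ω n ∈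
        (⊤ : Subgroup (FreeGroup (Fin 2))).lowerCentralSeries (Nat.fib n - 1))) ∧
    ∀ l : ℝ, Tendsto (fun n : ℕ => Real.log (minLenLCS n) / Real.log n)
        atTop (nhds l) →
      l ≤ Real.log 2 / Real.log ((1 + Real.sqrt 5) / 2) := by
  refine ⟨⟨fibonacciWord, fun n _ => fibonacciWord_ne_one n,
    ⟨1, fun n _ => by simpa using norm_fibonacciWord_le n⟩,
    fun n _ => fibonacciWord_mem_lowerCentralSeries n⟩, fun l hl => ?_⟩
  exact le_log_div_log_goldenRatio one_le_two (fun n => by exact_mod_cast minLenLCS_fib_le n) hl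
end

section
/- Let α > 1, b = 4^{1/(1−α)}, and M = 3/((1−b)^{1−α} − 1). Then 0 < b < 1, M > 0, and the inequality M ≥ M(1−b)^α + 4Mb^α + 2(1−b)^α + ε holds for all sufficiently small ε > 0; equivalently, M(1−b−(1−b)^α) ≥ 2(1−b)^α with the substitution b = 4b^α. -/
/-!
The exponent `1/(1-α)` makes `b` the positive fixed point of `x ↦ 4 x^α`, so the term `4 M b^α`
is just `M b`. Writing `A = (1-b)^α`, one has `1 - b - A = A ((1-b)^{1-α} - 1)`, so the choice of `M`
gives `M (1 - b - A) = 3A`. Both inequalities then reduce to `2A + ε ≤ 3A`, true for `ε ≤ A`.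
-/

open Real

theorem rpow_one_div_one_sub_eq_mul_rpow {c α : ℝ} (hc : 0 < c) (hα : α ≠ 1) :
    c ^ (1 / (1 - α)) = c * (c ^ (1 / (1 - α))) ^ α := by
  have hα' : 1 - α ≠ 0 := sub_ne_zero.mpr hα.symm
  have hexp : 1 / (1 - α) = 1 + 1 / (1 - α) * α := by field_simp; ring
  rw [← rpow_mul hc.le]
  conv_lhs => rw [hexp]
  rw [rpow_add hc, rpow_one]

theorem div_rpow_one_sub_sub_one_mul_sub_rpow {x α : ℝ} (K : ℝ) (hx : 0 < x)
    (hne : x ^ (1 - α) ≠ 1) :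
    K / (x ^ (1 - α) - 1) * (x - x ^ α) = K * x ^ α := by
  have hfactor : x - x ^ α = x ^ α * (x ^ (1 - α) - 1) := by
    rw [mul_sub, ← rpow_add hx, add_sub_cancel, rpow_one, mul_one]
  have hne' : x ^ (1 - α) - 1 ≠ 0 := sub_ne_zero.mpr hne
  rw [hfactor]
  field_simp

/-- Parameter check for the zigzag-golf recursion: with `α > 1`,
`b = 4^{1/(1-α)}` and `M = 3/((1-b)^{1-α} - 1)`, one has `0 < b < 1`, `M > 0`,
`b = 4·b^α`, the inequality
`M ≥ M(1-b)^α + 4M b^α + 2(1-b)^α + ε` for all sufficiently small `ε > 0`,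
and equivalently `M(1-b-(1-b)^α) ≥ 2(1-b)^α`. -/
theorem zigzag_golf_parameters (α : ℝ) (hα : 1 < α)
    (b M : ℝ) (hb : b = (4 : ℝ) ^ ((1 : ℝ) / (1 - α)))
    (hM : M = 3 / ((1 - b) ^ (1 - α) - 1)) :
    0 < b ∧ b < 1 ∧ 0 < M ∧ b = 4 * b ^ α ∧
      (∃ ε₀ > (0 : ℝ), ∀ ε, 0 < ε → ε < ε₀ →
        M * (1 - b) ^ α + 4 * M * b ^ α + 2 * (1 - b) ^ α + ε ≤ M) ∧
      M * (1 - b - (1 - b) ^ α) ≥ 2 * (1 - b) ^ α := by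
  have hb0 : 0 < b := hb ▸ rpow_pos_of_pos four_pos _
  have hb1 : b < 1 :=
    hb ▸ rpow_lt_one_of_one_lt_of_neg (by norm_num) (one_div_neg.mpr (by linarith))
  have hT : 1 < (1 - b) ^ (1 - α) :=
    one_lt_rpow_of_pos_of_lt_one_of_neg (by linarith) (by linarith) (by linarith)
  have hM0 : 0 < M := hM ▸ div_pos three_pos (by linarith)
  have hfix : b = 4 * b ^ α := hb ▸ rpow_one_div_one_sub_eq_mul_rpow four_pos hα.ne'
  have hbalance : M * (1 - b - (1 - b) ^ α) = 3 * (1 - b) ^ α :=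
    hM ▸ div_rpow_one_sub_sub_one_mul_sub_rpow 3 (by linarith) hT.ne'
  have hA : 0 < (1 - b) ^ α := rpow_pos_of_pos (by linarith) _
  refine ⟨hb0, hb1, hM0, hfix, ⟨(1 - b) ^ α, hA, fun ε _ hε => ?_⟩, by linarith⟩
  linarith [congrArg (M * ·) hfix]
end

section
/- Consider ℝ^{n+m} with the indefinite form ⟨x,y⟩₋ = Σ_{j≤n} x_j y_j − Σ_{j>n} x_j y_j. Let A = [[C, 0],[B, D]] be block lower-triangular with C an n×n orthogonal matrix, D an m×m orthogonal matrix, and B an m×n block. Suppose every vector of the form x = A(v ⊕ 0) = C(v) ⊕ B(v), v ∈ ℝⁿ, is non-timelike, i.e. ⟨x,x⟩₋ ≥ 0. Then the operator norm of A with respect to the standard Euclidean inner product satisfies ‖A‖_∞ ≤ φ = (1+√5)/2. -/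
/-!
Split `x = u ⊕ w`. Orthogonality of `C` and `D` and the non-timelike hypothesis give
`‖C u‖ = ‖u‖`, `‖B u‖ ≤ ‖u‖` and `‖D w‖ = ‖w‖`, hence `‖A x‖² ≤ a² + (a + b)²` with `a = ‖u‖`,
`b = ‖w‖`. Since `φ² = φ + 1`, the quadratic form `φ² (a² + b²) - a² - (a + b)²` is the square
`(φ - 1) (a - φ b)²`, so `‖A x‖ ≤ φ ‖x‖`.
-/

open Matrix WithLp Real
open scoped goldenRatio

lemma sq_add_add_sq_le_goldenRatio_sq_mul (a b : ℝ) :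
    a ^ 2 + (a + b) ^ 2 ≤ φ ^ 2 * (a ^ 2 + b ^ 2) := by
  have gap : φ ^ 2 * (a ^ 2 + b ^ 2) - (a ^ 2 + (a + b) ^ 2) = (φ - 1) * (a - φ * b) ^ 2 := by
    linear_combination (a ^ 2 + 2 * a * b - (φ - 1) * b ^ 2) * goldenRatio_sq
  rw [← sub_nonneg, gap]
  exact mul_nonneg (sub_nonneg.2 one_lt_goldenRatio.le) (sq_nonneg _)

lemma norm_sq_add_norm_add_sq_le_goldenRatio_sq_mul {E F : Type*} [SeminormedAddCommGroup E]
    [SeminormedAddCommGroup F] {a b : ℝ} {y : E} {z₁ z₂ : F}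
    (hy : ‖y‖ ≤ a) (hz₁ : ‖z₁‖ ≤ a) (hz₂ : ‖z₂‖ ≤ b) :
    ‖y‖ ^ 2 + ‖z₁ + z₂‖ ^ 2 ≤ φ ^ 2 * (a ^ 2 + b ^ 2) := by
  have hz : ‖z₁ + z₂‖ ≤ a + b := (norm_add_le z₁ z₂).trans (add_le_add hz₁ hz₂)
  calc ‖y‖ ^ 2 + ‖z₁ + z₂‖ ^ 2 ≤ a ^ 2 + (a + b) ^ 2 := by gcongr
    _ ≤ φ ^ 2 * (a ^ 2 + b ^ 2) := sq_add_add_sq_le_goldenRatio_sq_mul a b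

lemma EuclideanSpace.norm_toLp_sum_elim_sq {𝕜 ι κ : Type*} [RCLike 𝕜] [Fintype ι] [Fintype κ]
    (u : ι → 𝕜) (w : κ → 𝕜) :
    ‖toLp 2 (Sum.elim u w)‖ ^ 2 = ‖toLp 2 u‖ ^ 2 + ‖toLp 2 w‖ ^ 2 := by
  simp [EuclideanSpace.norm_sq_eq, Fintype.sum_sum_type]

lemma Matrix.toEuclideanCLM_fromBlocks_toLp_sum_elim {𝕜 ι κ : Type*} [RCLike 𝕜] [Fintype ι]
    [Fintype κ] [DecidableEq ι] [DecidableEq κ] (A : Matrix ι ι 𝕜) (B : Matrix ι κ 𝕜)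
    (C : Matrix κ ι 𝕜) (D : Matrix κ κ 𝕜) (u : ι → 𝕜) (w : κ → 𝕜) :
    toEuclideanCLM (𝕜 := 𝕜) (fromBlocks A B C D) (toLp 2 (Sum.elim u w)) =
      toLp 2 (Sum.elim (A *ᵥ u + B *ᵥ w) (C *ᵥ u + D *ᵥ w)) := by
  rw [toEuclideanCLM_toLp, fromBlocks_mulVec, Sum.elim_comp_inl, Sum.elim_comp_inr]

lemma Matrix.norm_toLp_mulVec_of_transpose_mul_self {ι κ : Type*} [Fintype ι] [Fintype κ]
    [DecidableEq κ] {M : Matrix ι κ ℝ} (hM : Mᵀ * M = 1) (v : κ → ℝ) :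
    ‖toLp 2 (M *ᵥ v)‖ = ‖toLp 2 v‖ := by
  have h : (M *ᵥ v) ⬝ᵥ (M *ᵥ v) = v ⬝ᵥ v := by
    rw [dotProduct_mulVec, ← mulVec_transpose, mulVec_mulVec, hM, one_mulVec]
  rw [← sq_eq_sq₀ (norm_nonneg _) (norm_nonneg _), EuclideanSpace.real_norm_sq_eq,
    EuclideanSpace.real_norm_sq_eq]
  simpa [dotProduct, sq] using h

/-- Slant lemma: let `A = [[C, 0], [B, D]]` be block lower-triangular on
`ℝⁿ ⊕ ℝᵐ` with `C`, `D` orthogonal.  If every vector `A(v ⊕ 0) = C v ⊕ B v`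
is non-timelike for the indefinite form `⟨x,x⟩₋ = ‖(x-part in ℝⁿ)‖² − ‖(x-part
in ℝᵐ)‖²`, i.e. `‖B v‖² ≤ ‖C v‖²` for all `v`, then the Euclidean operator
norm of `A` is at most the golden ratio `φ = (1+√5)/2`. -/
theorem slant_lemma (n m : ℕ)
    (C : Matrix (Fin n) (Fin n) ℝ) (D : Matrix (Fin m) (Fin m) ℝ)
    (B : Matrix (Fin m) (Fin n) ℝ)
    (hC : C.transpose * C = 1) (hD : D.transpose * D = 1)
    (hnt : ∀ v : Fin n → ℝ,
      ∑ j, (B.mulVec v j) ^ 2 ≤ ∑ j, (C.mulVec v j) ^ 2) :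
    ‖Matrix.toEuclideanCLM (𝕜 := ℝ) (Matrix.fromBlocks C 0 B D)‖ ≤
      (1 + Real.sqrt 5) / 2 := by
  refine ContinuousLinearMap.opNorm_le_bound _ goldenRatio_pos.le fun x => ?_
  obtain ⟨u, w, rfl⟩ : ∃ u w, x = toLp 2 (Sum.elim u w) :=
    ⟨_, _, by rw [Sum.elim_comp_inl_inr, toLp_ofLp]⟩
  have hCu := norm_toLp_mulVec_of_transpose_mul_self hC u
  have hBu : ‖toLp 2 (B *ᵥ u)‖ ≤ ‖toLp 2 u‖ := by
    rw [← hCu, ← sq_le_sq₀ (norm_nonneg _) (norm_nonneg _), EuclideanSpace.real_norm_sq_eq,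
      EuclideanSpace.real_norm_sq_eq]
    exact hnt u
  have hAx := norm_sq_add_norm_add_sq_le_goldenRatio_sq_mul hCu.le hBu
    (norm_toLp_mulVec_of_transpose_mul_self hD w).le
  rw [toEuclideanCLM_fromBlocks_toLp_sum_elim, zero_mulVec, add_zero,
    ← sq_le_sq₀ (norm_nonneg _) (by positivity), mul_pow,
    EuclideanSpace.norm_toLp_sum_elim_sq, EuclideanSpace.norm_toLp_sum_elim_sq]
  exact hAx
end
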